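/- arXiv:math/0405316 — 2 statements merged into one kernel-verified Lean document; each statement's English description precedes it below -/
import Mathlib

section
/- For natural numbers n and k with 1 ≤ k ≤ n−1, the alternative Legendre polynomials satisfy the three-term recurrence (as an identity of real polynomials, with the relation of the paper multiplied through by x): (k+1)(n−k+1)(n+k+1) · x · 𝒫_{n,k−1}(x) = ( k(2k+1)(2k+2) − (2k+1)((n+1)² + k² + k)·x ) · 𝒫_{n,k}(x) − k(n−k)(n+k+2) · x · 𝒫_{n,k+1}(x). -/
/-!
For every `m`, the coefficient of `X ^ m` in `ALP n k` is
`(-1) ^ (m + k) * C(n + m + 1, 2m + 1) * C(2m + 1, m + k + 1)`: the two binomials vanish exactly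
outside `k ≤ m ≤ n`, so no case distinction is needed. Comparing coefficients of `X ^ (m + 1)`,
the four terms involve `C(n + m + 2, 2m + 3)`, a rational multiple of `C(n + m + 1, 2m + 1)`,
and binomials of rows `2m + 1` and `2m + 3`, all rational multiples of `C(2m + 1, m + k)`.
After these substitutions the recurrence is an identity of rational functions of `n, m, k`.
-/

open Polynomial

noncomputable def ALP (n k : ℕ) : Polynomial ℝ :=
  ∑ j ∈ Finset.range (n - k + 1),
    Polynomial.C ((-1 : ℝ) ^ j * ((n - k).choose j) * ((n + k + 1 + j).choose (n - k))) *
      Polynomial.X ^ (k + j)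

theorem Nat.cast_choose_succ_mul {R : Type*} [Ring R] (N j : ℕ) :
    (N.choose (j + 1) : R) * (j + 1) = N.choose j * (N - j) := by
  rcases le_or_gt j N with h | h
  · rw [← Nat.cast_sub h]
    exact_mod_cast congrArg (Nat.cast (R := R)) (Nat.choose_succ_right_eq N j)
  · simp [Nat.choose_eq_zero_of_lt h, Nat.choose_eq_zero_of_lt (Nat.lt_succ_of_lt h)]

theorem Nat.cast_choose_add_one_add_two_mul {R : Type*} [CommRing R] (N j : ℕ) :
    ((N + 1).choose (j + 2) : R) * ((j + 1) * (j + 2)) = N.choose j * ((N + 1) * (N - j)) := by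
  have hsucc : ((N + 1 : ℕ) : R) * N.choose (j + 1) = (N + 1).choose (j + 2) * ((j + 1 : ℕ) + 1) :=
    mod_cast congrArg (Nat.cast (R := R)) (Nat.add_one_mul_choose_eq N (j + 1))
  push_cast at hsucc
  linear_combination (-(j + 1 : R)) * hsucc + (N + 1 : R) * Nat.cast_choose_succ_mul (R := R) N j

theorem Nat.choose_add_two_add_two (N j : ℕ) :
    (N + 2).choose (j + 2) = N.choose j + 2 * N.choose (j + 1) + N.choose (j + 2) := by
  simp only [Nat.choose_succ_succ]; ring

theorem Nat.choose_sub_mul_choose {n k m : ℕ} (hkn : k ≤ n) (hkm : k ≤ m) :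
    (n - k).choose (m - k) * (n + m + 1).choose (n - k) =
      (n + m + 1).choose (2 * m + 1) * (2 * m + 1).choose (m + k + 1) := by
  rw [Nat.choose_mul (by omega), mul_comm,
    Nat.choose_symm_of_eq_add (n := n + m + 1) (a := m + k + 1) (b := n - k) (by omega),
    show n + m + 1 - (m + k + 1) = n - k by omega, show 2 * m + 1 - (m + k + 1) = m - k by omega]

noncomputable def alpCoeff (n k m : ℕ) : ℝ :=
  (-1) ^ (m + k) * (n + m + 1).choose (2 * m + 1) * (2 * m + 1).choose (m + k + 1)

theorem coeff_ALP {n k : ℕ} (hk : k ≤ n) (m : ℕ) : (ALP n k).coeff m = alpCoeff n k m := by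
  simp only [ALP, finsetSum_coeff, coeff_C_mul_X_pow]
  rcases lt_or_ge m k with hmk | hkm
  · rw [Finset.sum_eq_zero fun j _ => if_neg (by omega), alpCoeff,
      Nat.choose_eq_zero_of_lt (by omega : 2 * m + 1 < m + k + 1)]
    simp
  obtain ⟨i, rfl⟩ := Nat.exists_eq_add_of_le hkm
  simp only [add_right_inj, Finset.sum_ite_eq, Finset.mem_range]
  have hsign : (-1 : ℝ) ^ (k + i + k) = (-1) ^ i := by
    rw [show k + i + k = i + 2 * k by ring, pow_add, pow_mul, neg_one_sq, one_pow, mul_one]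
  split_ifs with hi
  · have hchoose := Nat.choose_sub_mul_choose (n := n) hk hkm
    rw [Nat.add_sub_cancel_left, show n + (k + i) + 1 = n + k + 1 + i by ring] at hchoose
    rw [alpCoeff, hsign, show n + (k + i) + 1 = n + k + 1 + i by ring, mul_assoc, mul_assoc,
      ← Nat.cast_mul, hchoose, Nat.cast_mul]
  · rw [alpCoeff, Nat.choose_eq_zero_of_lt (by omega : n + (k + i) + 1 < 2 * (k + i) + 1)]
    simp

theorem alpCoeff_recurrence {k : ℕ} (hk : 1 ≤ k) (n m : ℕ) :
    ((k : ℝ) + 1) * ((n : ℝ) - k + 1) * ((n : ℝ) + k + 1) * alpCoeff n (k - 1) m =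
      (k : ℝ) * (2 * k + 1) * (2 * k + 2) * alpCoeff n k (m + 1) -
        (2 * (k : ℝ) + 1) * (((n : ℝ) + 1) ^ 2 + k ^ 2 + k) * alpCoeff n k m -
        (k : ℝ) * ((n : ℝ) - k) * ((n : ℝ) + k + 2) * alpCoeff n (k + 1) m := by
  obtain ⟨k, rfl⟩ := Nat.exists_eq_add_of_le' hk
  have hF := Nat.cast_choose_add_one_add_two_mul (R := ℝ) (n + m + 1) (2 * m + 1)
  have hc1 := Nat.cast_choose_succ_mul (R := ℝ) (2 * m + 1) (m + k + 1)
  have hc2 := Nat.cast_choose_succ_mul (R := ℝ) (2 * m + 1) (m + k + 2)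
  have hd := Nat.choose_add_two_add_two (2 * m + 1) (m + k + 1)
  simp only [alpCoeff, Nat.add_sub_cancel]
  rw [show n + (m + 1) + 1 = n + m + 1 + 1 by ring, show 2 * (m + 1) + 1 = 2 * m + 1 + 2 by ring,
    show m + 1 + (k + 1) + 1 = m + k + 1 + 2 by ring, hd,
    show m + (k + 1) + 1 = m + k + 1 + 1 by ring, show m + (k + 1 + 1) + 1 = m + k + 2 + 1 by ring,
    show m + k + 1 + 2 = m + k + 2 + 1 by ring,
    show (-1 : ℝ) ^ (m + 1 + (k + 1)) = (-1) ^ (m + k) by ring,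
    show (-1 : ℝ) ^ (m + (k + 1)) = -(-1) ^ (m + k) by ring,
    show (-1 : ℝ) ^ (m + (k + 1 + 1)) = (-1) ^ (m + k) by ring]
  push_cast at hF hc1 hc2 ⊢
  set F0 := ((n + m + 1).choose (2 * m + 1) : ℝ)
  set F1 := ((n + m + 1 + 1).choose (2 * m + 1 + 2) : ℝ)
  set c0 := ((2 * m + 1).choose (m + k + 1) : ℝ)
  set c1 := ((2 * m + 1).choose (m + k + 1 + 1) : ℝ)
  set c2 := ((2 * m + 1).choose (m + k + 2 + 1) : ℝ)
  have e1 : c1 = c0 * (m - k) / (m + k + 2) := by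
    rw [eq_div_iff (by positivity)]; linear_combination hc1
  have e2 : c2 = c1 * (m - k - 1) / (m + k + 3) := by
    rw [eq_div_iff (by positivity)]; linear_combination hc2
  have e3 : F1 = F0 * ((n + m + 2) * (n - m)) / ((2 * m + 2) * (2 * m + 3)) := by
    rw [eq_div_iff (by positivity)]; linear_combination hF
  rw [e3, e2, e1]
  field_simp
  ring

/-- Three-term recurrence for the alternative Legendre polynomials
(the relation of the paper multiplied through by x). -/
theorem ALP_recurrence (n k : ℕ) (hk : 1 ≤ k) (hkn : k + 1 ≤ n) :
    Polynomial.C (((k : ℝ) + 1) * ((n : ℝ) - k + 1) * ((n : ℝ) + k + 1)) *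
        Polynomial.X * ALP n (k - 1) =
      (Polynomial.C ((k : ℝ) * (2 * k + 1) * (2 * k + 2)) -
          Polynomial.C ((2 * (k : ℝ) + 1) * (((n : ℝ) + 1) ^ 2 + k ^ 2 + k)) * Polynomial.X) *
        ALP n k -
      Polynomial.C ((k : ℝ) * ((n : ℝ) - k) * ((n : ℝ) + k + 2)) * Polynomial.X *
        ALP n (k + 1) := by
  ext (_ | m)
  · simp [coeff_ALP (by omega : k ≤ n), alpCoeff, Nat.choose_eq_zero_of_lt (by omega : 1 < k + 1)]
  · simp only [mul_assoc, sub_mul, coeff_sub, coeff_C_mul, coeff_X_mul,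
      coeff_ALP (by omega : k - 1 ≤ n), coeff_ALP (by omega : k ≤ n), coeff_ALP hkn]
    linear_combination alpCoeff_recurrence hk n m
end

section
/- Let n and k be natural numbers with 1 ≤ k ≤ n. Suppose x_k, x_{k+1}, …, x_n are n−k+1 pairwise distinct real numbers in the open interval (0,1), each of which is a root of the alternative Legendre polynomial 𝒫_{n,k−1}, and define the weights w_j = 1 / ( Σ_{l=k}^{n} (2l+1) · 𝒫_{n,l}(x_j)² ) for j = k, …, n. Then the alternative Gauss quadrature formula Σ_{j=k}^{n} w_j · x_j^{m} = 1/(m+1) = ∫₀¹ x^m dx holds exactly for every integer m with 2k−1 ≤ m ≤ 2n. -/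
/-!
The moment formula
  `∫₀¹ 𝒫_{n,κ}(t) tˢ dt = (n-s)(n-s-1)⋯(n-s-(n-κ)+1) / ((κ+s+1)(κ+s+2)⋯(n+s+1))`,
a partial-fraction identity (Lagrange interpolation at the nodes `0, -1, …, -(n-κ)`), shows that
`𝒫_{n,κ}` is orthogonal on `[0,1]` to `tˢ` for `κ < s ≤ n`; hence
`∫₀¹ 𝒫_{n,l} 𝒫_{n,l'} = δ_{l l'} / (2l+1)` for `l, l' ≤ n`.

Write `𝒫_{n,k-1} = X^(k-1) R` with `deg R = n-k+1`. The nodes `x_j` are the roots of `R`, and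
`∫₀¹ t^(2k-1) R(t) r(t) dt = 0` whenever `deg r ≤ n-k`, so `R` is the orthogonal polynomial of
degree `n-k+1` for the weight `t^(2k-1)`. Gauss quadrature at its roots is exact up to degree
`2(n-k)+1`, which gives weights `W` integrating `t^m` exactly for `2k-1 ≤ m ≤ 2n`.

Exactness carries the orthogonality relations over to the nodes: for `B = (𝒫_{n,l}(x_j))`,
`B diag(W) Bᵀ = diag(1/(2l+1))`. As `B` is square, this inverts to
`diag(W) Bᵀ diag(2l+1) B = 1`, whose diagonal reads `W_j Σ_l (2l+1) 𝒫_{n,l}(x_j)² = 1`; so `W = w`.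
-/

open Polynomial

open Finset

noncomputable def unitIntegral : ℝ[X] →ₗ[ℝ] ℝ where
  toFun p := ∫ t in (0 : ℝ)..1, p.eval t
  map_add' p q := by
    simpa using intervalIntegral.integral_add (p.continuous.intervalIntegrable 0 1)
      (q.continuous.intervalIntegrable 0 1)
  map_smul' c p := by simp

lemma unitIntegral_X_pow (m : ℕ) : unitIntegral (X ^ m) = 1 / ((m : ℝ) + 1) := by
  simp [unitIntegral, integral_pow]

lemma LinearMap.eq_of_eq_on_X_pow {R M : Type*} [CommSemiring R] [AddCommMonoid M] [Module R M]
    (f g : R[X] →ₗ[R] M) {a b : ℕ} (h : ∀ m, a ≤ m → m ≤ b → f (X ^ m) = g (X ^ m))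
    {p : R[X]} (hdvd : X ^ a ∣ p) (hdeg : p.natDegree ≤ b) : f p = g p := by
  rw [p.as_sum_range' (b + 1) (Nat.lt_succ_of_le hdeg)]
  simp only [map_sum]
  refine sum_congr rfl fun d hd => ?_
  rw [← C_mul_X_pow_eq_monomial, C_mul', map_smul, map_smul]
  rcases lt_or_ge d a with hda | had
  · rw [(X_pow_dvd_iff.mp hdvd) d hda, zero_smul, zero_smul]
  · rw [h d had (Nat.le_of_lt_succ (Finset.mem_range.mp hd))]

lemma prod_erase_range_sub (M : ℕ) {j : ℕ} (hj : j ≤ M) :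
    ∏ i ∈ (range (M + 1)).erase j, ((i : ℝ) - j) = (-1) ^ j * j.factorial * (M - j).factorial := by
  set g : ℕ → ℝ := fun i => if i = j then 1 else (i : ℝ) - j
  have hlow : ∏ i ∈ range j, g i = (-1) ^ j * j.factorial := by
    calc ∏ i ∈ range j, g i = ∏ i ∈ range j, (-1 * ((j : ℝ) - i)) :=
          prod_congr rfl fun i hi => by simp [g, (Finset.mem_range.mp hi).ne]
      _ = (-1) ^ j * j.factorial := by
          rw [prod_mul_distrib, prod_const, card_range, ← descPochhammer_eval_eq_prod_range,
            descPochhammer_eval_eq_descFactorial, Nat.descFactorial_self]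
  have hhigh : ∏ i ∈ range (M - j + 1), g (j + i) = (M - j).factorial := by
    rw [prod_range_succ', ← prod_range_add_one_eq_factorial]
    push_cast
    simp [g]
  calc ∏ i ∈ (range (M + 1)).erase j, ((i : ℝ) - j) = ∏ i ∈ (range (M + 1)).erase j, g i :=
        prod_congr rfl fun i hi => by simp [g, (mem_erase.mp hi).1]
    _ = ∏ i ∈ range (j + (M - j + 1)), g i := by
        rw [prod_erase _ (by simp [g]), show M + 1 = j + (M - j + 1) by omega]
    _ = _ := by rw [prod_range_add, hlow, hhigh, mul_assoc]

lemma nodalWeight_neg_range (M : ℕ) {j : ℕ} (hj : j ≤ M) :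
    Lagrange.nodalWeight (range (M + 1)) (fun i : ℕ => -(i : ℝ)) j
      = (-1) ^ j * M.choose j / M.factorial := by
  rw [Lagrange.nodalWeight, prod_inv_distrib]
  simp only [neg_sub_neg]
  rw [prod_erase_range_sub M hj, ← Nat.choose_mul_factorial_mul_factorial hj]
  have : (j.factorial : ℝ) ≠ 0 := by positivity
  have : ((M - j).factorial : ℝ) ≠ 0 := by positivity
  have : (M.choose j : ℝ) ≠ 0 := by exact_mod_cast (Nat.choose_pos hj).ne'
  push_cast
  field_simp
  rw [← pow_mul, pow_mul', neg_one_sq, one_pow]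

lemma sum_alternating_choose_mul_eval_div (M : ℕ) {f : ℝ[X]} (hf : f.degree ≤ M) {b : ℝ}
    (hb : ∀ i ≤ M, b + i ≠ 0) :
    ∑ j ∈ range (M + 1), (-1) ^ j * M.choose j * f.eval (-(j : ℝ)) / (b + j)
      = M.factorial * f.eval b / ∏ i ∈ range (M + 1), (b + i) := by
  have hinj : Set.InjOn (fun i : ℕ => -(i : ℝ)) (range (M + 1)) := fun i _ j _ h => by
    simpa using h
  have hnode : ∀ i ∈ range (M + 1), b ≠ -(i : ℝ) := fun i hi h =>
    hb i (Nat.le_of_lt_succ (Finset.mem_range.mp hi)) (by rw [h]; ring)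
  have hprod : ∏ i ∈ range (M + 1), (b + i) ≠ 0 :=
    prod_ne_zero_iff.mpr fun i hi => hb i (Nat.le_of_lt_succ (Finset.mem_range.mp hi))
  have key := congrArg (eval b) (Lagrange.eq_interpolate hinj (s := range (M + 1))
    (f := f) (by rw [card_range]; exact hf.trans_lt (by exact_mod_cast Nat.lt_succ_self M)))
  rw [Lagrange.eval_interpolate_not_at_node _ hnode, Lagrange.eval_nodal] at key
  rw [key, eq_div_iff hprod, mul_comm, mul_sum, mul_sum, mul_sum]
  simp only [sub_neg_eq_add]
  refine sum_congr rfl fun j hj => ?_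
  rw [nodalWeight_neg_range M (Nat.le_of_lt_succ (Finset.mem_range.mp hj))]
  have : (M.factorial : ℝ) ≠ 0 := by positivity
  have : b + j ≠ 0 := hb j (Nat.le_of_lt_succ (Finset.mem_range.mp hj))
  field_simp

lemma sum_alternating_choose_mul_choose_div (M a : ℕ) {b : ℝ} (hb : ∀ i ≤ M, b + i ≠ 0) :
    ∑ j ∈ range (M + 1), (-1) ^ j * M.choose j * ((a + j).choose M : ℝ) / (b + j)
      = (descPochhammer ℝ M).eval (a - b) / ∏ i ∈ range (M + 1), (b + i) := by
  set f : ℝ[X] := (descPochhammer ℝ M).comp (C (a : ℝ) - X)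
  have hf : f.degree ≤ M := by
    refine degree_le_of_natDegree_le (natDegree_comp_le.trans ?_)
    have : (C (a : ℝ) - X).natDegree ≤ 1 := by compute_degree
    simpa [descPochhammer_natDegree] using Nat.mul_le_mul_left M this
  have hfj : ∀ j : ℕ, f.eval (-(j : ℝ)) = M.factorial * (a + j).choose M := fun j => by
    simp only [f, eval_comp, eval_sub, eval_C, eval_X, sub_neg_eq_add]
    rw [← Nat.cast_add, descPochhammer_eval_eq_descFactorial,
      Nat.descFactorial_eq_factorial_mul_choose, Nat.cast_mul]
  have hM : (M.factorial : ℝ) ≠ 0 := by positivity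
  have key := sum_alternating_choose_mul_eval_div M hf hb
  simp only [hfj, f, eval_comp, eval_sub, eval_C, eval_X] at key
  rw [← mul_right_inj' hM, mul_div_assoc', ← key, mul_sum]
  refine sum_congr rfl fun j _ => by ring

lemma unitIntegral_ALP_mul_X_pow (n κ t : ℕ) :
    unitIntegral (ALP n κ * X ^ t)
      = (descPochhammer ℝ (n - κ)).eval ((n : ℝ) - t)
        / ∏ i ∈ range (n - κ + 1), ((κ + t + 1 : ℝ) + i) := by
  have hterm : ∀ j, unitIntegral (C ((-1 : ℝ) ^ j * ((n - κ).choose j) *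
      ((n + κ + 1 + j).choose (n - κ))) * X ^ (κ + j) * X ^ t)
        = (-1) ^ j * ((n - κ).choose j) * ((n + κ + 1 + j).choose (n - κ) : ℝ)
          / ((κ + t + 1 : ℝ) + j) := fun j => by
    rw [mul_assoc, ← pow_add, C_mul', map_smul, unitIntegral_X_pow, smul_eq_mul]
    push_cast
    ring
  have hb : ∀ i ≤ n - κ, (κ + t + 1 : ℝ) + i ≠ 0 := fun i _ => by positivity
  rw [ALP, sum_mul, map_sum, sum_congr rfl fun j _ => hterm j,
    sum_alternating_choose_mul_choose_div (n - κ) (n + κ + 1) hb]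
  congr 2
  push_cast
  ring

lemma unitIntegral_ALP_mul_X_pow_eq_zero {n κ t : ℕ} (hκt : κ < t) (htn : t ≤ n) :
    unitIntegral (ALP n κ * X ^ t) = 0 := by
  rw [unitIntegral_ALP_mul_X_pow, ← Nat.cast_sub htn,
    descPochhammer_eval_coe_nat_of_lt (by omega), zero_div]

lemma unitIntegral_ALP_mul_eq_zero {n κ : ℕ} {p : ℝ[X]} (hdvd : X ^ (κ + 1) ∣ p)
    (hdeg : p.natDegree ≤ n) : unitIntegral (ALP n κ * p) = 0 :=
  (unitIntegral ∘ₗ LinearMap.mulLeft ℝ (ALP n κ)).eq_of_eq_on_X_pow 0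
    (fun _ hκt htn => unitIntegral_ALP_mul_X_pow_eq_zero hκt htn) hdvd hdeg

lemma exists_ALP_eq_X_pow_mul (n κ : ℕ) :
    ∃ R : ℝ[X], ALP n κ = X ^ κ * R ∧ R.degree = (n - κ : ℕ)
      ∧ R.coeff 0 = (n + κ + 1).choose (n - κ) := by
  set c : ℕ → ℝ := fun j => (-1 : ℝ) ^ j * ((n - κ).choose j) * ((n + κ + 1 + j).choose (n - κ))
  have hcoeff : ∀ d, (∑ j ∈ range (n - κ + 1), C (c j) * X ^ j).coeff d
      = if d < n - κ + 1 then c d else 0 := fun d => by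
    simp [finsetSum_coeff]
  refine ⟨∑ j ∈ range (n - κ + 1), C (c j) * X ^ j, ?_, ?_, ?_⟩
  · rw [ALP, mul_sum]
    exact sum_congr rfl fun j _ => by rw [pow_add]; ring
  · refine degree_eq_of_le_of_coeff_ne_zero ?_ ?_
    · refine (degree_le_iff_coeff_zero _ _).mpr fun d hd => ?_
      have : n - κ < d := by exact_mod_cast hd
      rw [hcoeff, if_neg (by omega)]
    · rw [hcoeff, if_pos (Nat.lt_succ_self _)]
      simpa [c] using (Nat.choose_pos (by omega)).ne'
  · rw [hcoeff, if_pos (Nat.succ_pos _)]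
    simp [c]

lemma natDegree_ALP_le {n κ : ℕ} (hκn : κ ≤ n) : (ALP n κ).natDegree ≤ n := by
  obtain ⟨R, hP, hR, -⟩ := exists_ALP_eq_X_pow_mul n κ
  rw [hP]
  refine natDegree_mul_le.trans ?_
  rw [natDegree_X_pow, natDegree_eq_of_degree_eq_some hR]
  omega

lemma unitIntegral_ALP_mul_ALP_of_lt {n l l' : ℕ} (hll' : l < l') (hl'n : l' ≤ n) :
    unitIntegral (ALP n l * ALP n l') = 0 := by
  obtain ⟨R, hP, -⟩ := exists_ALP_eq_X_pow_mul n l'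
  exact unitIntegral_ALP_mul_eq_zero ((pow_dvd_pow X hll').trans (hP ▸ dvd_mul_right _ _))
    (natDegree_ALP_le hl'n)

lemma unitIntegral_ALP_mul_self {n l : ℕ} (hln : l ≤ n) :
    unitIntegral (ALP n l * ALP n l) = 1 / (2 * l + 1) := by
  obtain ⟨R, hP, hR, hR0⟩ := exists_ALP_eq_X_pow_mul n l
  set M := n - l
  have hsplit : ALP n l = C (R.coeff 0) * X ^ l + X ^ l * (R - C (R.coeff 0)) := by
    rw [hP]; ring
  have htail : unitIntegral (ALP n l * (X ^ l * (R - C (R.coeff 0)))) = 0 := by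
    refine unitIntegral_ALP_mul_eq_zero (by rw [pow_succ]; exact mul_dvd_mul_left _ X_dvd_sub_C) ?_
    rw [show X ^ l * (R - C (R.coeff 0)) = ALP n l - C (R.coeff 0) * X ^ l by rw [hsplit]; ring]
    exact (natDegree_sub_le _ _).trans (max_le (natDegree_ALP_le hln)
      (natDegree_C_mul_X_pow_le _ _ |>.trans hln))
  have hnum : (descPochhammer ℝ M).eval ((n : ℝ) - l) = M.factorial := by
    rw [← Nat.cast_sub hln, descPochhammer_eval_eq_descFactorial, Nat.descFactorial_self]
  have hden : (2 * l).factorial * ∏ i ∈ range (M + 1), ((l + l + 1 : ℝ) + i)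
      = (n + l + 1).factorial := by
    rw [← show 2 * l + (M + 1) = n + l + 1 by omega, ← Nat.factorial_mul_ascFactorial,
      Nat.ascFactorial_eq_prod_range]
    push_cast
    ring_nf
  have hchoose := Nat.choose_mul_factorial_mul_factorial (show M ≤ n + l + 1 by omega)
  rw [show n + l + 1 - M = 2 * l + 1 by omega, Nat.factorial_succ] at hchoose
  nth_rw 2 [hsplit]
  rw [mul_add, map_add, htail, add_zero, mul_left_comm, C_mul', map_smul, smul_eq_mul,
    unitIntegral_ALP_mul_X_pow, hnum, hR0]
  have hprod : ∏ i ∈ range (M + 1), ((l + l + 1 : ℝ) + i) ≠ 0 := by positivity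
  rw [mul_div_assoc', div_eq_div_iff hprod (by positivity), one_mul]
  refine mul_left_cancel₀ (by positivity : ((2 * l).factorial : ℝ) ≠ 0) ?_
  rw [hden, ← hchoose]
  push_cast
  ring

lemma unitIntegral_ALP_mul_ALP {n l l' : ℕ} (hln : l ≤ n) (hl'n : l' ≤ n) :
    unitIntegral (ALP n l * ALP n l') = if l = l' then (1 : ℝ) / (2 * l + 1) else 0 := by
  rcases lt_trichotomy l l' with h | rfl | h
  · rw [if_neg h.ne, unitIntegral_ALP_mul_ALP_of_lt h hl'n]
  · rw [if_pos rfl, unitIntegral_ALP_mul_self hln]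
  · rw [if_neg h.ne', mul_comm, unitIntegral_ALP_mul_ALP_of_lt h hln]

lemma natDegree_div_lt_of_natDegree_lt_two_mul {F : Type*} [Field F] {g Q : F[X]} {N : ℕ}
    (hQ : Q.natDegree = N) (hg : g.natDegree < 2 * N) : (g / Q).natDegree < N := by
  by_cases h0 : g / Q = 0
  · rw [h0, natDegree_zero]; omega
  have hQ0 : Q ≠ 0 := fun h => by rw [h, natDegree_zero] at hQ; omega
  have hmod := natDegree_mod_lt g (q := Q) (by omega)
  have hmul : Q * (g / Q) = g - g % Q := eq_sub_of_add_eq (EuclideanDomain.div_add_mod g Q)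
  have := (congrArg natDegree hmul).trans_le (natDegree_sub_le g (g % Q))
  rw [natDegree_mul hQ0 h0] at this
  omega

lemma gauss_quadrature {F ι : Type*} [Field F] [DecidableEq ι] (L : F[X] →ₗ[F] F)
    {s : Finset ι} {v : ι → F} (hv : Set.InjOn v s) {Q : F[X]} (hQ : Q.natDegree = #s)
    (hQv : ∀ i ∈ s, Q.eval (v i) = 0) (horth : ∀ r : F[X], r.natDegree < #s → L (Q * r) = 0)
    {g : F[X]} (hg : g.natDegree < 2 * #s) :
    L g = ∑ i ∈ s, L (Lagrange.basis s v i) * g.eval (v i) := by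
  have hQ0 : Q ≠ 0 := fun h => by rw [h, natDegree_zero] at hQ; omega
  have hmod : (g % Q).degree < #s := by
    rw [← hQ, ← degree_eq_natDegree hQ0]; exact degree_mod_lt g hQ0
  have hdecomp := EuclideanDomain.div_add_mod g Q
  have heval : ∀ i ∈ s, (g % Q).eval (v i) = g.eval (v i) := fun i hi => by
    conv_rhs => rw [← hdecomp]
    rw [eval_add, eval_mul, hQv i hi, zero_mul, zero_add]
  conv_lhs => rw [← hdecomp, map_add, horth _ (natDegree_div_lt_of_natDegree_lt_two_mul hQ hg),
    zero_add, Lagrange.eq_interpolate hv hmod, Lagrange.interpolate_apply, map_sum]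
  refine sum_congr rfl fun i hi => ?_
  rw [C_mul', map_smul, smul_eq_mul, heval i hi, mul_comm]

open Matrix in
lemma mul_sum_mul_sq_eq_one_of_orthogonal {ι K : Type*} [DecidableEq ι] [Field K]
    {s : Finset ι} (B : ι → ι → K) (d e : ι → K) (he : ∀ l ∈ s, e l ≠ 0)
    (h : ∀ l ∈ s, ∀ l' ∈ s, ∑ j ∈ s, d j * (B l j * B l' j) = if l = l' then (e l)⁻¹ else 0)
    {j : ι} (hj : j ∈ s) : d j * ∑ l ∈ s, e l * B l j ^ 2 = 1 := by
  let A : Matrix s s K := Matrix.of fun l j => B l j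
  have hright : A * (diagonal (fun j : s => d j) * Aᵀ * diagonal (fun l : s => e l)) = 1 := by
    ext l l'
    simp only [mul_apply, diagonal_apply, one_apply, A, transpose_apply, of_apply, ite_mul,
      mul_ite, zero_mul, mul_zero, sum_ite_eq, sum_ite_eq', mem_univ, if_true]
    rw [sum_coe_sort s fun j => B l j * (d j * B l' j * e l')]
    calc ∑ j ∈ s, B l j * (d j * B l' j * e l')
        = (∑ j ∈ s, d j * (B l j * B l' j)) * e l' := by
          rw [sum_mul]; exact sum_congr rfl fun _ _ => by ring
      _ = _ := by
          rw [h l l.2 l' l'.2]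
          obtain rfl | hne := eq_or_ne l l'
          · rw [if_pos rfl, if_pos rfl, inv_mul_cancel₀ (he _ l.2)]
          · rw [if_neg (Subtype.coe_ne_coe.mpr hne), if_neg hne, zero_mul]
  -- a one-sided inverse of a square matrix is two-sided
  have hleft := congrArg (fun P : Matrix s s K => P ⟨j, hj⟩ ⟨j, hj⟩) (mul_eq_one_comm.mp hright)
  simp only [mul_apply, diagonal_apply, one_apply_eq, A, transpose_apply, of_apply, ite_mul,
      mul_ite, zero_mul, mul_zero, sum_ite_eq, sum_ite_eq', mem_univ, if_true] at hleft
  rw [sum_coe_sort s fun l => d j * B l j * e l * B l j] at hleft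
  rw [← hleft, mul_sum]
  exact sum_congr rfl fun l _ => by ring

lemma sum_mul_eval_eq_unitIntegral {ι : Type*} {s : Finset ι} {x W : ι → ℝ} {a b : ℕ}
    (hW : ∀ m, a ≤ m → m ≤ b → ∑ j ∈ s, W j * x j ^ m = 1 / ((m : ℝ) + 1))
    {p : ℝ[X]} (hdvd : X ^ a ∣ p) (hdeg : p.natDegree ≤ b) :
    ∑ j ∈ s, W j * p.eval (x j) = unitIntegral p := by
  have := (∑ j ∈ s, W j • leval (x j)).eq_of_eq_on_X_pow unitIntegral
    (fun m ham hmb => by simpa [unitIntegral_X_pow] using hW m ham hmb) hdvd hdeg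
  simpa using this

lemma exists_quadrature_weights {n k : ℕ} (hk : 1 ≤ k) (hkn : k ≤ n) {x : ℕ → ℝ}
    (hx0 : ∀ j ∈ Icc k n, x j ≠ 0) (hinj : Set.InjOn x (Icc k n))
    (hroot : ∀ j ∈ Icc k n, (ALP n (k - 1)).eval (x j) = 0) :
    ∃ W : ℕ → ℝ, ∀ m, 2 * k - 1 ≤ m → m ≤ 2 * n →
      ∑ j ∈ Icc k n, W j * x j ^ m = 1 / ((m : ℝ) + 1) := by
  have hcard : #(Icc k n) = n - (k - 1) := by rw [Nat.card_Icc]; omega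
  obtain ⟨R, hP, hR, -⟩ := exists_ALP_eq_X_pow_mul n (k - 1)
  have hRroot : ∀ j ∈ Icc k n, R.eval (x j) = 0 := fun j hj => by
    have := hroot j hj
    rwa [hP, eval_mul, eval_pow, eval_X, mul_eq_zero, or_iff_right (pow_ne_zero _ (hx0 j hj))]
      at this
  set L := unitIntegral ∘ₗ LinearMap.mulLeft ℝ (X ^ (2 * k - 1) : ℝ[X])
  have horth : ∀ r : ℝ[X], r.natDegree < #(Icc k n) → L (R * r) = 0 := fun r hr => by
    have : X ^ (2 * k - 1) * (R * r) = ALP n (k - 1) * (X ^ k * r) := by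
      rw [hP, show 2 * k - 1 = k - 1 + k by omega, pow_add]; ring
    simp only [L, LinearMap.comp_apply, LinearMap.mulLeft_apply, this]
    refine unitIntegral_ALP_mul_eq_zero (by rw [Nat.sub_add_cancel hk]; exact dvd_mul_right _ _) ?_
    exact natDegree_mul_le.trans (by rw [natDegree_X_pow]; omega)
  -- Gauss weights of `L` (integration against `t ^ (2k-1) dt`), divided by `x j ^ (2k-1)`
  refine ⟨fun j => L (Lagrange.basis (Icc k n) x j) / x j ^ (2 * k - 1), fun m hm1 hm2 => ?_⟩
  have hLm : L (X ^ (m - (2 * k - 1))) = 1 / ((m : ℝ) + 1) := by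
    simp only [L, LinearMap.comp_apply, LinearMap.mulLeft_apply, ← pow_add,
      Nat.add_sub_cancel' hm1, unitIntegral_X_pow]
  rw [← hLm, gauss_quadrature L hinj (hcard ▸ natDegree_eq_of_degree_eq_some hR) hRroot horth
      (by rw [natDegree_X_pow]; omega)]
  refine sum_congr rfl fun j hj => ?_
  have hxm : x j ^ m = x j ^ (2 * k - 1) * x j ^ (m - (2 * k - 1)) := by
    rw [← pow_add, Nat.add_sub_cancel' hm1]
  rw [eval_pow, eval_X, hxm]
  field_simp [pow_ne_zero _ (hx0 j hj)]

lemma mul_sum_ALP_eval_sq_eq_one {n k : ℕ} {x W : ℕ → ℝ}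
    (hW : ∀ m, 2 * k - 1 ≤ m → m ≤ 2 * n → ∑ j ∈ Icc k n, W j * x j ^ m = 1 / ((m : ℝ) + 1))
    {j : ℕ} (hj : j ∈ Icc k n) :
    W j * ∑ l ∈ Icc k n, (2 * (l : ℝ) + 1) * (ALP n l).eval (x j) ^ 2 = 1 := by
  refine mul_sum_mul_sq_eq_one_of_orthogonal (fun l j => (ALP n l).eval (x j)) W
    (fun l => 2 * (l : ℝ) + 1) (fun l _ => by positivity) (fun l hl l' hl' => ?_) hj
  rw [mem_Icc] at hl hl'
  simp only [← eval_mul]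
  rw [sum_mul_eval_eq_unitIntegral hW, unitIntegral_ALP_mul_ALP hl.2 hl'.2, one_div]
  · obtain ⟨R, hP, -⟩ := exists_ALP_eq_X_pow_mul n l
    obtain ⟨R', hP', -⟩ := exists_ALP_eq_X_pow_mul n l'
    rw [hP, hP', mul_mul_mul_comm, ← pow_add]
    exact (pow_dvd_pow X (by omega)).trans (dvd_mul_right _ _)
  · exact natDegree_mul_le.trans (by linarith [natDegree_ALP_le hl.2, natDegree_ALP_le hl'.2])

/-- Alternative Gauss quadrature: if x_k, …, x_n are pairwise distinct roots of
𝒫_{n,k−1} in (0,1) and w_j = 1 / (Σ_{l=k}^n (2l+1) 𝒫_{n,l}(x_j)²), then the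
quadrature Σ_j w_j x_j^m = 1/(m+1) = ∫₀¹ x^m dx is exact for 2k−1 ≤ m ≤ 2n. -/
theorem ALP_gauss_quadrature (n k : ℕ) (hk : 1 ≤ k) (hkn : k ≤ n)
    (x : ℕ → ℝ)
    (hmem : ∀ j ∈ Finset.Icc k n, x j ∈ Set.Ioo (0:ℝ) 1)
    (hdist : ∀ j ∈ Finset.Icc k n, ∀ j' ∈ Finset.Icc k n, j ≠ j' → x j ≠ x j')
    (hroot : ∀ j ∈ Finset.Icc k n, (ALP n (k - 1)).eval (x j) = 0)
    (w : ℕ → ℝ)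
    (hw : ∀ j ∈ Finset.Icc k n,
      w j = 1 / ∑ l ∈ Finset.Icc k n, (2 * (l : ℝ) + 1) * (ALP n l).eval (x j) ^ 2)
    (m : ℕ) (hm1 : 2 * k - 1 ≤ m) (hm2 : m ≤ 2 * n) :
    (∑ j ∈ Finset.Icc k n, w j * x j ^ m) = 1 / ((m : ℝ) + 1) ∧
      (1 : ℝ) / ((m : ℝ) + 1) = ∫ t in (0:ℝ)..1, t ^ m := by
  obtain ⟨W, hW⟩ := exists_quadrature_weights hk hkn (fun j hj => (hmem j hj).1.ne')
    (fun j hj j' hj' => not_imp_not.mp (hdist j hj j' hj')) hroot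
  have hwW : ∀ j ∈ Icc k n, w j = W j := fun j hj =>
    (hw j hj).trans (eq_one_div_of_mul_eq_one_left (mul_sum_ALP_eval_sq_eq_one hW hj)).symm
  refine ⟨(sum_congr rfl fun j hj => by rw [hwW j hj]).trans (hW m hm1 hm2), ?_⟩
  rw [integral_pow]
  norm_num
end
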